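/- arXiv:1710.08701 — 2 statements merged into one kernel-verified Lean document; each statement's English description precedes it below -/
import Mathlib

section
/- Let t, Δ ≥ 1 be integers. Let G be a connected graph of maximum degree at most Δ with more than (t+2)·Δ vertices, and let v ∈ V(G). Then either G contains two disjoint vertex sets A, B, each of size at least Δ, with no edges between A and B, or G contains an induced path on t vertices with one endpoint v. -/
open Finset

def Anti {V : Type} (G : SimpleGraph V) (A B : Finset V) : Prop :=
  ∀ a ∈ A, ∀ b ∈ B, ¬ G.Adj a b

def FullAdj {V : Type} (G : SimpleGraph V) (A B : Finset V) : Prop :=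
  ∀ a ∈ A, ∀ b ∈ B, G.Adj a b

def ConnOn {V : Type} (G : SimpleGraph V) (A : Finset V) : Prop :=
  (G.induce (A : Set V)).Connected

def Nbr {V : Type} [Fintype V] [DecidableEq V] (G : SimpleGraph V) [DecidableRel G.Adj]
    (A : Finset V) : Finset V :=
  Finset.univ.filter (fun v => ∃ a ∈ A, G.Adj v a)

def IsIndPath {V : Type} (G : SimpleGraph V) {h : ℕ} (f : Fin h → V) : Prop :=
  Function.Injective f ∧
    ∀ i j : Fin h, G.Adj (f i) (f j) ↔ (i.val + 1 = j.val ∨ j.val + 1 = i.val)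

def colClass {V : Type} [Fintype V] [DecidableEq V] {ℓ : ℕ} (col : V → Fin ℓ) (i : Fin ℓ) :
    Finset V :=
  Finset.univ.filter (fun v => col v = i)

def IsBud {V : Type} [Fintype V] [DecidableEq V] (G : SimpleGraph V) [DecidableRel G.Adj]
    {ℓ : ℕ} (col : V → Fin ℓ) (α : ℝ) (B : Finset V) : Prop :=
  ConnOn G B ∧ ∃ j : Fin ℓ,
    α * ((colClass col j).card : ℝ) ≤ (((Nbr G B) ∩ colClass col j).card : ℝ)


/-!
Grow an induced path from `v` greedily, keeping its tip `x` inside a connected region `C` that no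
other path vertex sees. Delete `x` and its at most `Δ` neighbours from `C`, take a largest
component `D` of what is left, and continue the path through a neighbour of `x` adjacent to `D`,
with `D` plus that neighbour as the new region; the rest is discarded. The discarded vertices
always induce a graph whose components have fewer than `Δ` vertices: either `|D| < Δ`, and then
every leftover component is small, or `|D| ≥ Δ`, and then fewer than `Δ` vertices can have been
discarded, since they are anti-adjacent to `D`. Such a set splits into two anti-adjacent sets of
size at least `Δ` once it has `3Δ - 1` vertices. Each step loses at most `Δ` further vertices, so
with more than `(t + 2)Δ` vertices the region cannot run out before the path has `t` vertices.
-/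

open SimpleGraph

section Connectivity

variable {V : Type} {G : SimpleGraph V}

theorem anti_comm {A B : Finset V} : Anti G A B ↔ Anti G B A :=
  ⟨fun h b hb a ha hba => h a ha b hb hba.symm, fun h a ha b hb hab => h b hb a ha hab.symm⟩

theorem connOn_singleton (x : V) : ConnOn G {x} := by
  rw [ConnOn, Finset.coe_singleton]
  have : Nonempty ({x} : Set V) := ⟨⟨x, rfl⟩⟩
  exact Connected.of_subsingleton

theorem connOn_univ [Fintype V] (hG : G.Connected) : ConnOn G Finset.univ := by
  rw [ConnOn, Finset.coe_univ]
  exact (induceUnivIso G).connected_iff.mpr hG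

theorem ConnOn.nonempty {X : Finset V} (hX : ConnOn G X) : X.Nonempty := by
  obtain ⟨⟨x, hx⟩⟩ := Connected.nonempty hX
  exact ⟨x, hx⟩

theorem ConnOn.insert [DecidableEq V] {X : Finset V} {x y : V} (hX : ConnOn G X) (hx : x ∈ X)
    (hxy : G.Adj y x) : ConnOn G (insert y X) := by
  have hy : ConnOn G {y} := connOn_singleton y
  rw [ConnOn, Finset.coe_singleton] at hy
  rw [ConnOn, Finset.coe_insert, Set.insert_eq]
  exact connected_induce_union hy.preconnected hX.preconnected (Set.mem_singleton y) hx hxy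

theorem ConnOn.exists_adj_of_notMem {C D : Finset V} (hC : ConnOn G C) {a b : V} (ha : a ∈ C)
    (haD : a ∉ D) (hb : b ∈ C) (hbD : b ∈ D) : ∃ x ∈ C, x ∉ D ∧ ∃ w ∈ D, G.Adj x w := by
  obtain ⟨p⟩ := Connected.preconnected hC ⟨a, ha⟩ ⟨b, hb⟩
  obtain ⟨d, -, hd₁, hd₂⟩ := p.exists_boundary_dart {z | z.val ∉ D} haD (not_not.mpr hbD)
  exact ⟨d.fst.val, d.fst.prop, hd₁, d.snd.val, not_not.mp hd₂, d.adj⟩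

theorem exists_connOn_card_max {T : Finset V} (hT : T.Nonempty) :
    ∃ D ⊆ T, ConnOn G D ∧ ∀ Y ⊆ T, ConnOn G Y → Y.card ≤ D.card := by
  classical
  obtain ⟨x, hx⟩ := hT
  have hne : (T.powerset.filter (ConnOn G)).Nonempty :=
    ⟨{x}, Finset.mem_filter.mpr ⟨by simpa using hx, connOn_singleton x⟩⟩
  obtain ⟨D, hD, hmax⟩ := Finset.exists_max_image _ Finset.card hne
  rw [Finset.mem_filter, Finset.mem_powerset] at hD
  exact ⟨D, hD.1, hD.2, fun Y hYT hY => hmax Y (by simp [hYT, hY])⟩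

variable [DecidableEq V]

theorem anti_sdiff_of_forall_card_le {X T : Finset V} (hXT : X ⊆ T) (hX : ConnOn G X)
    (hmax : ∀ Y ⊆ T, X ⊆ Y → ConnOn G Y → Y.card ≤ X.card) : Anti G X (T \ X) := by
  intro x hx y hy hxy
  rw [Finset.mem_sdiff] at hy
  have hle := hmax (insert y X) (Finset.insert_subset hy.1 hXT) (Finset.subset_insert y X)
    (hX.insert hx hxy.symm)
  rw [Finset.card_insert_of_notMem hy.2] at hle
  omega

theorem exists_connOn_anti_of_mem {T : Finset V} {x : V} (hx : x ∈ T) :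
    ∃ X ⊆ T, x ∈ X ∧ ConnOn G X ∧ Anti G X (T \ X) := by
  classical
  have hne : (T.powerset.filter (fun X => x ∈ X ∧ ConnOn G X)).Nonempty :=
    ⟨{x}, Finset.mem_filter.mpr
      ⟨by simpa using hx, Finset.mem_singleton_self x, connOn_singleton x⟩⟩
  obtain ⟨X, hX, hmax⟩ := Finset.exists_max_image _ Finset.card hne
  simp only [Finset.mem_filter, Finset.mem_powerset] at hX hmax
  exact ⟨X, hX.1, hX.2.1, hX.2.2, anti_sdiff_of_forall_card_le hX.1 hX.2.2
    fun Y hYT hXY hY => hmax Y ⟨hYT, hXY hX.2.1, hY⟩⟩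

end Connectivity

section SmallComponents

variable {V : Type} {G : SimpleGraph V}

def HasAntiPair (G : SimpleGraph V) (Δ : ℕ) : Prop :=
  ∃ A B : Finset V, Disjoint A B ∧ Δ ≤ A.card ∧ Δ ≤ B.card ∧ Anti G A B

variable [DecidableEq V] {Δ : ℕ}

/-- Every component of `G[A]` has fewer than `Δ` vertices, phrased without components: every
vertex of `A` lies in a union of components of `G[A]` with fewer than `Δ` vertices. -/
def HasSmallComponents (G : SimpleGraph V) (Δ : ℕ) (A : Finset V) : Prop :=
  ∀ a ∈ A, ∃ X ⊆ A, a ∈ X ∧ X.card < Δ ∧ Anti G X (A \ X)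

theorem hasSmallComponents_of_card_lt {A : Finset V} (hA : A.card < Δ) :
    HasSmallComponents G Δ A :=
  fun _ ha => ⟨A, subset_rfl, ha, hA, by simp [Anti]⟩

theorem HasSmallComponents.union {A B : Finset V} (hA : HasSmallComponents G Δ A)
    (hB : HasSmallComponents G Δ B) (hAB : Anti G A B) : HasSmallComponents G Δ (A ∪ B) := by
  have key : ∀ {A B : Finset V}, HasSmallComponents G Δ A → Anti G A B →
      ∀ a ∈ A, ∃ X ⊆ A ∪ B, a ∈ X ∧ X.card < Δ ∧ Anti G X ((A ∪ B) \ X) := by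
    intro A B hA hAB a ha
    obtain ⟨X, hXA, haX, hXcard, hX⟩ := hA a ha
    refine ⟨X, hXA.trans Finset.subset_union_left, haX, hXcard, fun x hx y hy => ?_⟩
    rw [Finset.mem_sdiff, Finset.mem_union] at hy
    rcases hy with ⟨hyA | hyB, hyX⟩
    · exact hX x hx y (Finset.mem_sdiff.mpr ⟨hyA, hyX⟩)
    · exact hAB x (hXA hx) y hyB
  intro a ha
  rcases Finset.mem_union.mp ha with haA | haB
  · exact key hA hAB a haA
  · rw [Finset.union_comm]
    exact key hB (anti_comm.mp hAB) a haB

theorem hasSmallComponents_sdiff_of_card_max {D T : Finset V}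
    (hmax : ∀ Y ⊆ T, ConnOn G Y → Y.card ≤ D.card) (hD : D.card < Δ) :
    HasSmallComponents G Δ (T \ D) := by
  intro x hx
  obtain ⟨X, hXT, hxX, hX, hXanti⟩ := exists_connOn_anti_of_mem (G := G) hx
  exact ⟨X, hXT, hxX, (hmax X (hXT.trans Finset.sdiff_subset) hX).trans_lt hD, hXanti⟩

theorem HasSmallComponents.exists_anti_sdiff {A : Finset V} (hA : HasSmallComponents G Δ A)
    (hΔ : 0 < Δ) (hΔA : Δ ≤ A.card) :
    ∃ B ⊆ A, Anti G B (A \ B) ∧ Δ ≤ B.card ∧ B.card < 2 * Δ := by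
  classical
  have hne : (A.powerset.filter (fun B => Anti G B (A \ B) ∧ Δ ≤ B.card)).Nonempty :=
    ⟨A, Finset.mem_filter.mpr ⟨Finset.mem_powerset_self A, by simp [Anti], hΔA⟩⟩
  obtain ⟨B, hB, hmin⟩ := Finset.exists_min_image _ Finset.card hne
  simp only [Finset.mem_filter, Finset.mem_powerset] at hB hmin
  obtain ⟨hBA, hBanti, hΔB⟩ := hB
  refine ⟨B, hBA, hBanti, hΔB, ?_⟩
  obtain ⟨b, hb⟩ : B.Nonempty := Finset.card_pos.mp (hΔ.trans_le hΔB)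
  obtain ⟨X, hXA, hbX, hXcard, hXanti⟩ := hA b (hBA hb)
  -- by minimality of `B`, removing the small piece `X` from it leaves fewer than `Δ` vertices
  have hanti : Anti G (B \ X) (A \ (B \ X)) := by
    intro x hx y hy hxy
    rw [Finset.mem_sdiff] at hx hy
    by_cases hyB : y ∈ B
    · exact hXanti y (by grind) x (Finset.mem_sdiff.mpr ⟨hBA hx.1, hx.2⟩) hxy.symm
    · exact hBanti x hx.1 y (Finset.mem_sdiff.mpr ⟨hy.1, hyB⟩) hxy
  have hsmall : (B \ X).card < Δ := by
    by_contra! h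
    have hle := hmin (B \ X) ⟨Finset.sdiff_subset.trans hBA, hanti, h⟩
    have hlt : (B \ X).card < B.card :=
      Finset.card_lt_card ⟨Finset.sdiff_subset, fun h => (Finset.mem_sdiff.mp (h hb)).2 hbX⟩
    omega
  have := Finset.card_le_card_sdiff_add_card (s := B) (t := X)
  omega

theorem HasSmallComponents.hasAntiPair {A : Finset V} (hA : HasSmallComponents G Δ A)
    (hΔ : 0 < Δ) (hΔA : 3 * Δ ≤ A.card + 1) : HasAntiPair G Δ := by
  obtain ⟨B, hBA, hB, hΔB, hB2⟩ := hA.exists_anti_sdiff hΔ (by omega)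
  refine ⟨B, A \ B, Finset.disjoint_sdiff, hΔB, ?_, hB⟩
  rw [Finset.card_sdiff_of_subset hBA]
  omega

end SmallComponents

section InducedPath

variable {V : Type} {G : SimpleGraph V}

theorem isIndPath_const_one (v : V) : IsIndPath G (fun _ : Fin 1 => v) :=
  ⟨fun i j _ => Subsingleton.elim i j, fun i j => by simp [Fin.val_eq_zero]⟩

theorem IsIndPath.snoc {k : ℕ} {f : Fin (k + 1) → V} {u : V} (hf : IsIndPath G f)
    (hu : ∀ i, f i ≠ u) (hlast : G.Adj (f (Fin.last k)) u)
    (hinner : ∀ i : Fin k, ¬ G.Adj (f i.castSucc) u) :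
    IsIndPath G (Fin.snoc f u : Fin (k + 2) → V) := by
  have hadj : ∀ j : Fin (k + 1), G.Adj (f j) u ↔ j.val + 1 = k + 1 := by
    intro j
    induction j using Fin.lastCases with
    | last => simpa using hlast
    | cast j => simpa [hinner j] using j.isLt.ne
  refine ⟨fun i j hij => ?_, fun i j => ?_⟩
  · induction i using Fin.lastCases <;> induction j using Fin.lastCases
    all_goals simp only [Fin.snoc_castSucc, Fin.snoc_last] at hij
    · rfl
    · exact absurd hij.symm (hu _)
    · exact absurd hij (hu _)
    · rw [hf.1 hij]
  · induction i using Fin.lastCases <;> induction j using Fin.lastCases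
    all_goals simp only [Fin.snoc_castSucc, Fin.snoc_last, Fin.val_last, Fin.val_castSucc]
    · simp
    · rw [G.adj_comm, hadj]; omega
    · rw [hadj]; omega
    · exact hf.2 _ _

end InducedPath

section Growth

variable {V : Type} [Fintype V] [DecidableEq V] {G : SimpleGraph V} {Δ : ℕ} {v : V} {k : ℕ}

/-- The path may only continue inside `region`. In `card_le`, `k * Δ + 1` accounts for the path
and for the neighbours of its earlier tips, which can no longer be used. -/
structure Stage (G : SimpleGraph V) (Δ : ℕ) (v : V) (k : ℕ) where
  path : Fin (k + 1) → V
  region : Finset V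
  discarded : Finset V
  isIndPath : IsIndPath G path
  path_zero : path 0 = v
  tip_mem : path (Fin.last k) ∈ region
  connOn : ConnOn G region
  notMem_region : ∀ i : Fin k, path i.castSucc ∉ region
  anti_region : ∀ i : Fin k, ∀ c ∈ region, c ≠ path (Fin.last k) → ¬ G.Adj (path i.castSucc) c
  disjoint : Disjoint discarded region
  anti_discarded : Anti G discarded (region.erase (path (Fin.last k)))
  hasSmallComponents : HasSmallComponents G Δ discarded
  card_le : Fintype.card V ≤ k * Δ + 1 + discarded.card + region.card

namespace Stage

variable (s : Stage G Δ v k)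

abbrev tip : V := s.path (Fin.last k)

theorem path_ne_of_adj_tip {u : V} (hu : u ∈ s.region) (htip : G.Adj s.tip u)
    (i : Fin (k + 1)) : s.path i ≠ u := by
  induction i using Fin.lastCases with
  | last => exact htip.ne
  | cast i => exact fun h => s.notMem_region i (h ▸ hu)

variable [DecidableRel G.Adj]

def far : Finset V := s.region \ insert s.tip (G.neighborFinset s.tip)

theorem mem_far {c : V} : c ∈ s.far ↔ c ∈ s.region ∧ c ≠ s.tip ∧ ¬ G.Adj s.tip c := by
  simp [far, mem_neighborFinset]

theorem far_subset : s.far ⊆ s.region := Finset.sdiff_subset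

theorem path_notMem_far (i : Fin (k + 1)) : s.path i ∉ s.far := by
  induction i using Fin.lastCases with
  | last => exact fun h => (s.mem_far.mp h).2.1 rfl
  | cast i => exact fun h => s.notMem_region i (s.far_subset h)

theorem not_adj_far (i : Fin (k + 1)) {c : V} (hc : c ∈ s.far) : ¬ G.Adj (s.path i) c := by
  obtain ⟨hcr, hct, hadj⟩ := s.mem_far.mp hc
  induction i using Fin.lastCases with
  | last => exact hadj
  | cast i => exact s.anti_region i c hcr hct

theorem anti_discarded_far : Anti G s.discarded s.far := fun a ha c hc =>
  s.anti_discarded a ha c (Finset.mem_erase.mpr ⟨(s.mem_far.mp hc).2.1, s.far_subset hc⟩)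

theorem card_region_sdiff_far_le (hdeg : ∀ w, G.degree w ≤ Δ) :
    (s.region \ s.far).card ≤ Δ + 1 := by
  rw [far, Finset.sdiff_sdiff_self_left]
  calc (s.region ∩ insert s.tip (G.neighborFinset s.tip)).card
      ≤ (insert s.tip (G.neighborFinset s.tip)).card :=
        Finset.card_le_card Finset.inter_subset_right
    _ ≤ (G.neighborFinset s.tip).card + 1 := Finset.card_insert_le _ _
    _ ≤ Δ + 1 := by rw [card_neighborFinset_eq_degree]; exact Nat.add_le_add_right (hdeg _) 1

theorem hasAntiPair_or_far_nonempty (hΔ : 0 < Δ) (hdeg : ∀ w, G.degree w ≤ Δ)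
    (hV : (k + 4) * Δ < Fintype.card V) : HasAntiPair G Δ ∨ s.far.Nonempty := by
  by_cases hA : 3 * Δ ≤ s.discarded.card + 1
  · exact Or.inl (s.hasSmallComponents.hasAntiPair hΔ hA)
  refine Or.inr (Finset.nonempty_iff_ne_empty.mpr fun hfar => ?_)
  have hregion := s.card_region_sdiff_far_le hdeg
  rw [hfar, Finset.sdiff_empty] at hregion
  have := s.card_le
  have : (k + 4) * Δ = k * Δ + 4 * Δ := by ring
  omega

variable {D : Finset V}

theorem disjoint_discarded_union (hDf : D ⊆ s.far) : Disjoint (s.discarded ∪ (s.far \ D)) D :=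
  Finset.disjoint_union_left.mpr
    ⟨s.disjoint.mono_right (hDf.trans s.far_subset), Finset.sdiff_disjoint⟩

theorem anti_discarded_union (hDf : D ⊆ s.far) (hD : Anti G D (s.far \ D)) :
    Anti G (s.discarded ∪ (s.far \ D)) D := by
  intro a ha d hd
  rcases Finset.mem_union.mp ha with haA | haF
  · exact s.anti_discarded_far a haA d (hDf hd)
  · exact anti_comm.mp hD a haF d hd

theorem exists_adj_tip (hDf : D ⊆ s.far) (hDne : D.Nonempty) (hD : Anti G D (s.far \ D)) :
    ∃ u ∈ s.region, u ∉ s.far ∧ G.Adj s.tip u ∧ ∃ w ∈ D, G.Adj u w := by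
  obtain ⟨d, hd⟩ := hDne
  have htipD : s.tip ∉ D := fun h => (s.mem_far.mp (hDf h)).2.1 rfl
  obtain ⟨u, hu, huD, w, hw, huw⟩ :=
    s.connOn.exists_adj_of_notMem s.tip_mem htipD (s.far_subset (hDf hd)) hd
  have hufar : u ∉ s.far := fun h => hD w hw u (Finset.mem_sdiff.mpr ⟨h, huD⟩) huw.symm
  refine ⟨u, hu, hufar, ?_, w, hw, huw⟩
  by_contra hnadj
  obtain rfl : u = s.tip := by
    by_contra hne
    exact hufar (s.mem_far.mpr ⟨hu, hne, hnadj⟩)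
  exact (s.mem_far.mp (hDf hw)).2.2 huw

def extend (hDf : D ⊆ s.far) (hDconn : ConnOn G D) (hD : Anti G D (s.far \ D)) {u : V}
    (hu : u ∈ s.region) (hufar : u ∉ s.far) (htip : G.Adj s.tip u) (huD : ∃ w ∈ D, G.Adj u w)
    (hsmall : HasSmallComponents G Δ (s.discarded ∪ (s.far \ D)))
    (hdeg : ∀ w, G.degree w ≤ Δ) : Stage G Δ v (k + 1) where
  path := Fin.snoc s.path u
  region := insert u D
  discarded := s.discarded ∪ (s.far \ D)
  isIndPath := IsIndPath.snoc s.isIndPath (s.path_ne_of_adj_tip hu htip) htip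
    fun i => s.anti_region i u hu htip.ne.symm
  path_zero := by
    rw [show (0 : Fin (k + 2)) = Fin.castSucc 0 from rfl, Fin.snoc_castSucc]
    exact s.path_zero
  tip_mem := by
    rw [Fin.snoc_last]
    exact Finset.mem_insert_self u D
  connOn := by
    obtain ⟨w, hw, huw⟩ := huD
    exact hDconn.insert hw huw
  notMem_region := by
    intro i
    rw [Fin.snoc_castSucc, Finset.mem_insert, not_or]
    exact ⟨s.path_ne_of_adj_tip hu htip i, fun h => s.path_notMem_far i (hDf h)⟩
  anti_region := by
    intro i c hc hcu
    rw [Fin.snoc_last] at hcu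
    rw [Fin.snoc_castSucc]
    exact s.not_adj_far i (hDf ((Finset.mem_insert.mp hc).resolve_left hcu))
  disjoint := by
    rw [Finset.disjoint_insert_right, Finset.mem_union, Finset.mem_sdiff, not_or]
    exact ⟨⟨fun h => Finset.disjoint_left.mp s.disjoint h hu, fun h => hufar h.1⟩,
      s.disjoint_discarded_union hDf⟩
  anti_discarded := by
    rw [Fin.snoc_last, Finset.erase_insert fun h => hufar (hDf h)]
    exact s.anti_discarded_union hDf hD
  hasSmallComponents := hsmall
  card_le := by
    have h₁ := s.card_le
    have h₂ := s.card_region_sdiff_far_le hdeg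
    have h₃ := Finset.card_sdiff_add_card_eq_card s.far_subset
    have h₄ := Finset.card_sdiff_add_card_eq_card hDf
    rw [Finset.card_union_of_disjoint
        (s.disjoint.mono_right (Finset.sdiff_subset.trans s.far_subset)),
      Finset.card_insert_of_notMem fun h => hufar (hDf h)]
    have : (k + 1) * Δ = k * Δ + Δ := by ring
    omega

end Stage

variable [DecidableRel G.Adj]

theorem Stage.step (s : Stage G Δ v k) (hΔ : 0 < Δ) (hdeg : ∀ w, G.degree w ≤ Δ)
    (hV : (k + 4) * Δ < Fintype.card V) : HasAntiPair G Δ ∨ Nonempty (Stage G Δ v (k + 1)) := by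
  obtain hpair | hfar := s.hasAntiPair_or_far_nonempty hΔ hdeg hV
  · exact Or.inl hpair
  obtain ⟨D, hDf, hDconn, hDmax⟩ := exists_connOn_card_max hfar
  have hD := anti_sdiff_of_forall_card_le hDf hDconn fun Y hY _ hYc => hDmax Y hY hYc
  obtain ⟨u, hu, hufar, htip, huD⟩ := s.exists_adj_tip hDf hDconn.nonempty hD
  by_cases hbig : Δ ≤ D.card ∧ Δ ≤ (s.discarded ∪ (s.far \ D)).card
  · exact Or.inl ⟨_, D, s.disjoint_discarded_union hDf, hbig.2, hbig.1,
      s.anti_discarded_union hDf hD⟩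
  refine Or.inr ⟨s.extend hDf hDconn hD hu hufar htip huD ?_ hdeg⟩
  rcases Nat.lt_or_ge D.card Δ with hDsmall | hDbig
  · exact s.hasSmallComponents.union (hasSmallComponents_sdiff_of_card_max hDmax hDsmall)
      fun a ha c hc => s.anti_discarded_far a ha c (Finset.sdiff_subset hc)
  · exact hasSmallComponents_of_card_lt (not_le.mp fun h => hbig ⟨hDbig, h⟩)

def Stage.initial (hG : G.Connected) (v : V) : Stage G Δ v 0 where
  path _ := v
  region := Finset.univ
  discarded := ∅
  isIndPath := isIndPath_const_one v
  path_zero := rfl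
  tip_mem := Finset.mem_univ v
  connOn := connOn_univ hG
  notMem_region i := i.elim0
  anti_region i := i.elim0
  disjoint := Finset.disjoint_empty_left _
  anti_discarded := by simp [Anti]
  hasSmallComponents := by simp [HasSmallComponents]
  card_le := by simp

theorem hasAntiPair_or_nonempty_stage (hΔ : 0 < Δ) (hG : G.Connected)
    (hdeg : ∀ w, G.degree w ≤ Δ) {t : ℕ} (hV : (t + 2) * Δ < Fintype.card V) (v : V) :
    ∀ k, k + 1 ≤ t → HasAntiPair G Δ ∨ Nonempty (Stage G Δ v k)
  | 0, _ => Or.inr ⟨Stage.initial hG v⟩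
  | k + 1, hk => (hasAntiPair_or_nonempty_stage hΔ hG hdeg hV v k (by omega)).elim Or.inl
      fun ⟨s⟩ => s.step hΔ hdeg ((Nat.mul_le_mul_right Δ (by omega : k + 4 ≤ t + 2)).trans_lt hV)

end Growth

/-- path-growing lemma, Bousquet–Lagoutte–Thomassé:
for integers `t, Δ ≥ 1`, every connected graph `G` of maximum degree at most `Δ`
on more than `(t+2)·Δ` vertices and every vertex `v` either contains a pair of disjoint
anti-adjacent vertex sets of size at least `Δ` each, or an induced path on `t` vertices
with one endpoint `v`. -/
theorem stmt0 {V : Type} [Fintype V] [DecidableEq V] (G : SimpleGraph V) [DecidableRel G.Adj]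
    (t Δ : ℕ) (ht : 1 ≤ t) (hΔ : 1 ≤ Δ)
    (hconn : G.Connected) (hdeg : ∀ w : V, G.degree w ≤ Δ)
    (hcard : (t + 2) * Δ < Fintype.card V) (v : V) :
    (∃ A B : Finset V, Disjoint A B ∧ Δ ≤ A.card ∧ Δ ≤ B.card ∧ Anti G A B) ∨
    (∃ f : Fin t → V, IsIndPath G f ∧ f ⟨0, ht⟩ = v) := by
  obtain ⟨k, rfl⟩ : ∃ k, t = k + 1 := ⟨t - 1, by omega⟩
  exact (hasAntiPair_or_nonempty_stage hΔ hconn hdeg hcard v k le_rfl).imp id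
    fun ⟨s⟩ => ⟨s.path, s.isIndPath, s.path_zero⟩
end

section
/- Let G be a graph and Δ ≥ 1 an integer such that G contains no two disjoint anti-adjacent vertex sets each of size at least Δ. Then for every subset C ⊆ V(G) with |C| ≥ 3Δ, the largest connected component of the induced subgraph G[C] has more than |C| − Δ vertices. -/
open Finset

/-!
Edges of `G[C]` never join two different components, so every union of
components of `G[C]` is anti-adjacent to the rest of `C`. If no component had more than
`|C| - Δ` vertices, some union of components would have between `Δ` and `|C| - Δ` vertices:
either a single component of size at least `Δ`, or, when all components are smaller than `Δ`,
a union of them grown one component at a time until it first reaches `Δ`, which then has fewer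
than `2Δ ≤ |C| - Δ` vertices. That union and its complement in `C` contradict the hypothesis.
-/

theorem Finset.exists_subset_le_sum_lt_two_mul {ι : Type*} (s : Finset ι) (f : ι → ℕ)
    {m : ℕ} (hm : 0 < m) (hf : ∀ i ∈ s, f i ≤ m) (hs : m ≤ ∑ i ∈ s, f i) :
    ∃ t ⊆ s, m ≤ ∑ i ∈ t, f i ∧ ∑ i ∈ t, f i < 2 * m := by
  classical
  induction s using Finset.induction_on with
  | empty => exact ⟨∅, empty_subset _, hs, by simp at hs ⊢; omega⟩
  | insert a s has ih =>
    rw [sum_insert has] at hs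
    by_cases hsm : m ≤ ∑ i ∈ s, f i
    · obtain ⟨t, hts, ht⟩ := ih (fun i hi => hf i (mem_insert_of_mem hi)) hsm
      exact ⟨t, hts.trans (subset_insert a s), ht⟩
    · have := hf a (mem_insert_self a s)
      exact ⟨insert a s, Subset.rfl, by rw [sum_insert has]; omega⟩

section Fibers

variable {W κ : Type} [Fintype W] [DecidableEq κ]
  {H : SimpleGraph W} {g : W → κ}

lemma anti_filter_mem_filter_not_mem (hg : ∀ u v, H.Adj u v → g u = g v) (T : Finset κ) :
    Anti H {w | g w ∈ T} {w | g w ∉ T} := by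
  intro u hu v hv huv
  simp only [mem_filter, mem_univ, true_and] at hu hv
  exact hv (hg u v huv ▸ hu)

theorem exists_card_fiber_gt [Fintype κ] {Δ : ℕ} (hΔ : 0 < Δ)
    (hno : ¬ ∃ A B : Finset W, Disjoint A B ∧ Δ ≤ #A ∧ Δ ≤ #B ∧ Anti H A B)
    (hW : 3 * Δ ≤ Fintype.card W) (hg : ∀ u v, H.Adj u v → g u = g v) :
    ∃ k, Fintype.card W - Δ < #{w | g w = k} := by
  by_contra! hsmall
  have hmedium : ∀ T : Finset κ,
      Δ ≤ #{w | g w ∈ T} → #{w | g w ∈ T} + Δ ≤ Fintype.card W → False := by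
    intro T hlo hhi
    refine hno ⟨_, _, disjoint_filter_filter_not _ _ _, hlo, ?_,
      anti_filter_mem_filter_not_mem hg T⟩
    have := card_filter_add_card_filter_not (s := univ) (fun w => g w ∈ T)
    rw [card_univ] at this
    omega
  by_cases hbig : ∃ k, Δ ≤ #{w | g w = k}
  · obtain ⟨k, hk⟩ := hbig
    have hk' := hsmall k
    refine hmedium {k} ?_ ?_ <;> simp only [mem_singleton] <;> omega
  · push Not at hbig
    have htotal : ∑ k, #{w | g w = k} = Fintype.card W := by
      rw [sum_card_fiberwise_eq_card_filter]; simp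
    obtain ⟨T, -, hlo, hhi⟩ := exists_subset_le_sum_lt_two_mul univ (fun k => #{w | g w = k})
      hΔ (fun k _ => (hbig k).le) (by omega)
    rw [sum_card_fiberwise_eq_card_filter] at hlo hhi
    exact hmedium T hlo (by omega)

end Fibers

section Induce

variable {V : Type} {G : SimpleGraph V} {C : Finset V}

lemma Anti.map_subtype {A B : Finset C} (h : Anti (G.induce (C : Set V)) A B) :
    Anti G (A.map (Function.Embedding.subtype _)) (B.map (Function.Embedding.subtype _)) := by
  simp only [Anti, mem_map, Function.Embedding.coe_subtype, forall_exists_index, and_imp]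
  rintro _ a ha rfl _ b hb rfl
  exact h a ha b hb

lemma connOn_map_subtype {t : Finset C}
    (h : ((G.induce (C : Set V)).induce (t : Set C)).Connected) :
    ConnOn G (t.map (Function.Embedding.subtype _)) := by
  let f : (G.induce (C : Set V)).induce (t : Set C) →g
      G.induce ((t.map (Function.Embedding.subtype _) : Finset V) : Set V) :=
    ⟨fun v => ⟨v.1.1, by simp⟩, fun h => h⟩
  refine h.map f ?_
  rintro ⟨v, hv⟩
  simp only [coe_map, Function.Embedding.coe_subtype, Set.mem_image, mem_coe] at hv
  obtain ⟨w, hw, rfl⟩ := hv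
  exact ⟨⟨w, hw⟩, rfl⟩

end Induce

/-- if a graph `G` has no two disjoint anti-adjacent vertex sets of size
at least `Δ` each, then for every `C ⊆ V(G)` with `|C| ≥ 3Δ` the largest connected component
of `G[C]` has more than `|C| − Δ` vertices, i.e. there is a connected subset `D ⊆ C`
with `|D| > |C| − Δ`. -/
theorem stmt1 {V : Type} [Fintype V] [DecidableEq V] (G : SimpleGraph V)
    (Δ : ℕ) (hΔ : 1 ≤ Δ)
    (hno : ¬ ∃ A B : Finset V, Disjoint A B ∧ Δ ≤ A.card ∧ Δ ≤ B.card ∧ Anti G A B)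
    (C : Finset V) (hC : 3 * Δ ≤ C.card) :
    ∃ D : Finset V, D ⊆ C ∧ ConnOn G D ∧ C.card - Δ < D.card := by
  classical
  set H := G.induce (C : Set V)
  have hnoH : ¬ ∃ A B : Finset C, Disjoint A B ∧ Δ ≤ #A ∧ Δ ≤ #B ∧ Anti H A B := by
    rintro ⟨A, B, hAB, hA, hB, hanti⟩
    exact hno ⟨_, _, disjoint_map _ |>.mpr hAB, by simpa using hA, by simpa using hB,
      hanti.map_subtype⟩
  obtain ⟨c, hc⟩ := exists_card_fiber_gt hΔ hnoH (by simpa using hC)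
    (g := H.connectedComponentMk) fun u v huv => SimpleGraph.ConnectedComponent.eq.mpr huv.reachable
  refine ⟨_, coe_subset.mp (map_subtype_subset _),
    connOn_map_subtype (t := {w | H.connectedComponentMk w = c}) ?_, by simpa using hc⟩
  have hsupp : (({w | H.connectedComponentMk w = c} : Finset C) : Set C) = c.supp := by
    ext; simp [SimpleGraph.ConnectedComponent.mem_supp_iff]
  rw [hsupp]
  exact c.connected_toSimpleGraph
end
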